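/- arXiv:1211.1344 — 9 statements merged into one kernel-verified Lean document; each statement's English description precedes it below -/
import Mathlib

section
/- Let z ∈ ℝⁿ with n ≥ 1, and let f₁(λ) = ‖S(z,λ)‖₁ + λ. Then for every λ ≥ 0, f₁(λ) ≥ ‖z‖_∞, with equality attained at λ = ‖z‖_∞ if the maximal absolute entry of z is unique; in particular the minimum value of f₁ over λ ≥ 0 equals ‖z‖_∞. -/
noncomputable def softTh (x t : ℝ) : ℝ := Real.sign x * max (|x| - t) 0

/-! Each coordinate obeys `|x| ≤ |S(x, λ)| + λ`, so `‖z‖_∞ ≤ ‖S(z, λ)‖₁ + λ`; at `λ = ‖z‖_∞`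
every entry is thresholded to zero, so the bound is attained there. -/

theorem abs_softTh_of_nonneg (x : ℝ) {t : ℝ} (ht : 0 ≤ t) : |softTh x t| = max (|x| - t) 0 := by
  rcases lt_trichotomy x 0 with hx | rfl | hx
  · simp [softTh, Real.sign_of_neg hx]
  · simp [softTh, ht]
  · simp [softTh, Real.sign_of_pos hx]

theorem softTh_eq_zero_of_abs_le {x t : ℝ} (h : |x| ≤ t) : softTh x t = 0 := by
  simp [softTh, h]

theorem abs_le_abs_softTh_add (x : ℝ) {t : ℝ} (ht : 0 ≤ t) : |x| ≤ |softTh x t| + t := by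
  rw [abs_softTh_of_nonneg x ht]
  linarith [le_max_left (|x| - t) 0]

section Finite

variable {ι : Type*} [Fintype ι] (z : ι → ℝ)

theorem iSup_abs_le_sum_abs_softTh_add {t : ℝ} (ht : 0 ≤ t) :
    (⨆ k, |z k|) ≤ (∑ k, |softTh (z k) t|) + t := by
  have hsum : ∀ k, |softTh (z k) t| ≤ ∑ j, |softTh (z j) t| := fun k =>
    Finset.single_le_sum (f := fun j => |softTh (z j) t|) (fun _ _ => abs_nonneg _)
      (Finset.mem_univ k)
  refine Real.iSup_le (fun k => ?_) (by positivity)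
  linarith [abs_le_abs_softTh_add (z k) ht, hsum k]

theorem sum_abs_softTh_iSup_abs : (∑ k, |softTh (z k) (⨆ j, |z j|)|) = 0 :=
  Finset.sum_eq_zero fun k _ => by
    rw [softTh_eq_zero_of_abs_le (le_ciSup (Set.finite_range fun j => |z j|).bddAbove k), abs_zero]

theorem isLeast_sum_abs_softTh_add :
    IsLeast ((fun t => (∑ k, |softTh (z k) t|) + t) '' Set.Ici 0) (⨆ k, |z k|) := by
  refine ⟨⟨_, Real.iSup_nonneg fun k => abs_nonneg (z k), ?_⟩, ?_⟩
  · simp only [sum_abs_softTh_iSup_abs, zero_add]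
  · rintro _ ⟨t, ht, rfl⟩
    exact iSup_abs_le_sum_abs_softTh_add z ht

end Finite

theorem stmt_4_general (n : ℕ) (z : Fin n → ℝ) :
    (∀ lam : ℝ, 0 ≤ lam → (⨆ k, |z k|) ≤ (∑ k, |softTh (z k) lam|) + lam) ∧
    ((∃! k : Fin n, |z k| = ⨆ k, |z k|) →
      (∑ k, |softTh (z k) (⨆ k, |z k|)|) + (⨆ k, |z k|) = ⨆ k, |z k|) ∧
    sInf ((fun lam => (∑ k, |softTh (z k) lam|) + lam) '' Set.Ici (0:ℝ)) = ⨆ k, |z k| :=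
  ⟨fun _ => iSup_abs_le_sum_abs_softTh_add z,
    fun _ => by rw [sum_abs_softTh_iSup_abs, zero_add],
    (isLeast_sum_abs_softTh_add z).csInf_eq⟩

theorem stmt_4 (n : ℕ) (hn : 1 ≤ n) (z : Fin n → ℝ) :
    (∀ lam : ℝ, 0 ≤ lam → (⨆ k, |z k|) ≤ (∑ k, |softTh (z k) lam|) + lam) ∧
    ((∃! k : Fin n, |z k| = ⨆ k, |z k|) →
      (∑ k, |softTh (z k) (⨆ k, |z k|)|) + (⨆ k, |z k|) = ⨆ k, |z k|) ∧
    sInf ((fun lam => (∑ k, |softTh (z k) lam|) + lam) '' Set.Ici (0:ℝ)) = ⨆ k, |z k| :=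
  stmt_4_general n z
end

section
/- Let z ∈ ℝⁿ and w > 0. The set {λ ≥ 0 : ‖S(z,λ)‖₁ + λ ≤ w} is nonempty if and only if ‖z‖_∞ ≤ w, and when nonempty its supremum equals w. -/
lemma abs_softTh (x t : ℝ) (ht : 0 ≤ t) : |softTh x t| = max (|x| - t) 0 := by
  unfold softTh
  rcases lt_trichotomy x 0 with h | h | h
  · rw [Real.sign_of_neg h, abs_mul, abs_neg, abs_one, one_mul,
      abs_of_nonneg (le_max_right _ _)]
  · subst h
    simp [max_eq_right (neg_nonpos.mpr ht)]
  · rw [Real.sign_of_pos h, one_mul, abs_of_nonneg (le_max_right _ _)]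

theorem stmt_5 (n : ℕ) (z : Fin n → ℝ) (w : ℝ) (hw : 0 < w) :
    ({lam : ℝ | 0 ≤ lam ∧ (∑ k, |softTh (z k) lam|) + lam ≤ w}.Nonempty ↔ (⨆ k, |z k|) ≤ w) ∧
    ((⨆ k, |z k|) ≤ w →
      sSup {lam : ℝ | 0 ≤ lam ∧ (∑ k, |softTh (z k) lam|) + lam ≤ w} = w) := by
  set Sset : Set ℝ := {lam : ℝ | 0 ≤ lam ∧ (∑ k, |softTh (z k) lam|) + lam ≤ w} with hS
  have hmem : (⨆ k, |z k|) ≤ w → w ∈ Sset := by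
    intro h
    refine ⟨hw.le, ?_⟩
    have hz : ∀ k, |z k| ≤ w := fun k =>
      le_trans (le_ciSup (f := fun k => |z k|) (Set.Finite.bddAbove (Set.finite_range _)) k) h
    have hzero : ∀ k : Fin n, |softTh (z k) w| = 0 := by
      intro k
      rw [abs_softTh _ _ hw.le, max_eq_right (by linarith [hz k])]
    simp [hzero]
  have hub : ∀ lam ∈ Sset, lam ≤ w := by
    rintro lam ⟨h0, hle⟩
    have hnn : 0 ≤ ∑ k, |softTh (z k) lam| :=
      Finset.sum_nonneg fun k _ => abs_nonneg _
    linarith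
  constructor
  · constructor
    · rintro ⟨lam, h0, hle⟩
      apply Real.iSup_le _ hw.le
      intro k
      have h1 : |softTh (z k) lam| ≤ ∑ j, |softTh (z j) lam| :=
        Finset.single_le_sum (f := fun j => |softTh (z j) lam|) (fun j _ => abs_nonneg _) (Finset.mem_univ k)
      have h2 : |z k| - lam ≤ |softTh (z k) lam| := by
        rw [abs_softTh _ _ h0]; exact le_max_left _ _
      linarith
    · intro h
      exact ⟨w, hmem h⟩
  · intro h
    exact le_antisymm (csSup_le ⟨w, hmem h⟩ hub) (le_csSup ⟨w, hub⟩ (hmem h))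
end

section
/- Fix w ∈ ℝ, z ∈ ℝⁿ, and λ₁, λ₂ ≥ 0 with λ₁ > 0. Then the convex optimization problem: minimize (1/2)(w - (β⁺ - β⁻))² + (1/2)‖z - θ‖² + λ₁(β⁺ + β⁻) + λ₂‖θ‖₁ over β⁺, β⁻ ≥ 0 and θ ∈ ℝⁿ subject to ‖θ‖₁ ≤ β⁺ + β⁻, has a unique minimizer. -/
noncomputable def objFn (n : ℕ) (lam1 lam2 w : ℝ) (z : Fin n → ℝ)
    (p : ℝ × ℝ × (Fin n → ℝ)) : ℝ :=
  (1/2) * (w - (p.1 - p.2.1))^2 + (1/2) * (∑ k, (z k - p.2.2 k)^2)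
    + lam1 * (p.1 + p.2.1) + lam2 * ∑ k, |p.2.2 k|

def Feasible (n : ℕ) (p : ℝ × ℝ × (Fin n → ℝ)) : Prop :=
  0 ≤ p.1 ∧ 0 ≤ p.2.1 ∧ (∑ k, |p.2.2 k|) ≤ p.1 + p.2.1

set_option maxHeartbeats 1000000 in
theorem stmt_10 (n : ℕ) (w : ℝ) (z : Fin n → ℝ) (lam1 lam2 : ℝ)
    (h1 : 0 < lam1) (h2 : 0 ≤ lam2) :
    ∃! p : ℝ × ℝ × (Fin n → ℝ), Feasible n p ∧
      ∀ q : ℝ × ℝ × (Fin n → ℝ), Feasible n q →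
        objFn n lam1 lam2 w z p ≤ objFn n lam1 lam2 w z q := by
  set f := objFn n lam1 lam2 w z with hfdef
  -- basic nonnegativity facts
  have habs_nonneg : ∀ p : ℝ × ℝ × (Fin n → ℝ), (0:ℝ) ≤ ∑ k, |p.2.2 k| :=
    fun p => Finset.sum_nonneg fun k _ => abs_nonneg _
  have hsq_nonneg : ∀ p : ℝ × ℝ × (Fin n → ℝ), (0:ℝ) ≤ ∑ k, (z k - p.2.2 k)^2 :=
    fun p => Finset.sum_nonneg fun k _ => sq_nonneg _
  have key : ∀ p, Feasible n p → lam1 * (p.1 + p.2.1) ≤ f p := by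
    intro p hp
    have hA : (0:ℝ) ≤ (1/2) * (w - (p.1 - p.2.1))^2 := by positivity
    have hB : (0:ℝ) ≤ (1/2) * (∑ k, (z k - p.2.2 k)^2) := by
      have := hsq_nonneg p; linarith
    have hC : (0:ℝ) ≤ lam2 * ∑ k, |p.2.2 k| := mul_nonneg h2 (habs_nonneg p)
    simp only [hfdef, objFn]; linarith
  have hcont : Continuous f := by
    simp only [hfdef, objFn]
    apply Continuous.add
    apply Continuous.add
    apply Continuous.add
    · exact (continuous_const.mul (((continuous_const.sub
        (continuous_fst.sub (continuous_fst.comp continuous_snd))).pow 2)))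
    · exact continuous_const.mul (continuous_finset_sum _ fun k _ =>
        ((continuous_const.sub ((continuous_apply k).comp
          (continuous_snd.comp continuous_snd))).pow 2))
    · exact continuous_const.mul (continuous_fst.add
        (continuous_fst.comp continuous_snd))
    · exact continuous_const.mul (continuous_finset_sum _ fun k _ =>
        ((continuous_apply k).comp (continuous_snd.comp continuous_snd)).abs)
  -- the zero point
  have hfeas0 : Feasible n (0, 0, 0) := by
    refine ⟨le_refl _, le_refl _, ?_⟩
    simp
  have hf0 : (0:ℝ) ≤ f (0,0,0) := by
    have := key _ hfeas0
    simpa using le_trans (by simp) this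
  set R : ℝ := f (0,0,0) / lam1 with hR
  have hR0 : 0 ≤ R := div_nonneg hf0 h1.le
  set S : Set (ℝ × ℝ × (Fin n → ℝ)) := {p | Feasible n p ∧ f p ≤ f (0,0,0)} with hS
  have hbound : ∀ p ∈ S, p.1 ≤ R ∧ p.2.1 ≤ R ∧ ∀ k, |p.2.2 k| ≤ R := by
    intro p hp
    obtain ⟨⟨hp1, hp2, hp3⟩, hple⟩ := hp
    have h4 : lam1 * (p.1 + p.2.1) ≤ f (0,0,0) := le_trans (key p ⟨hp1, hp2, hp3⟩) hple
    have hsumR : p.1 + p.2.1 ≤ R := by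
      rw [hR, le_div_iff₀ h1]; linarith [h4]
    refine ⟨by linarith, by linarith, fun k => ?_⟩
    have hk : |p.2.2 k| ≤ ∑ j, |p.2.2 j| :=
      Finset.single_le_sum (f := fun j => |p.2.2 j|) (fun j _ => abs_nonneg _)
        (Finset.mem_univ k)
    linarith
  have hclosed : IsClosed S := by
    have h1c : IsClosed {p : ℝ × ℝ × (Fin n → ℝ) | 0 ≤ p.1} :=
      isClosed_le continuous_const continuous_fst
    have h2c : IsClosed {p : ℝ × ℝ × (Fin n → ℝ) | 0 ≤ p.2.1} :=
      isClosed_le continuous_const (continuous_fst.comp continuous_snd)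
    have h3c : IsClosed {p : ℝ × ℝ × (Fin n → ℝ) | (∑ k, |p.2.2 k|) ≤ p.1 + p.2.1} :=
      isClosed_le (continuous_finset_sum _ fun k _ =>
        ((continuous_apply k).comp (continuous_snd.comp continuous_snd)).abs)
        (continuous_fst.add (continuous_fst.comp continuous_snd))
    have h4c : IsClosed {p : ℝ × ℝ × (Fin n → ℝ) | f p ≤ f (0,0,0)} :=
      isClosed_le hcont continuous_const
    have : S = ({p | 0 ≤ p.1} ∩ {p | 0 ≤ p.2.1} ∩
        {p | (∑ k, |p.2.2 k|) ≤ p.1 + p.2.1}) ∩ {p | f p ≤ f (0,0,0)} := by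
      ext p; simp [hS, Feasible, and_assoc]
    rw [this]
    exact (((h1c.inter h2c).inter h3c)).inter h4c
  have hbdd : Bornology.IsBounded S := by
    rw [Metric.isBounded_iff_subset_closedBall 0]
    refine ⟨R, fun p hp => ?_⟩
    obtain ⟨hb1, hb2, hb3⟩ := hbound p hp
    obtain ⟨⟨hp1, hp2, _⟩, _⟩ := hp
    simp only [Metric.mem_closedBall, dist_zero_right]
    rw [Prod.norm_def]
    apply max_le
    · rw [Real.norm_eq_abs, abs_of_nonneg hp1]; exact hb1
    · rw [Prod.norm_def]
      apply max_le
      · rw [Real.norm_eq_abs, abs_of_nonneg hp2]; exact hb2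
      · rw [pi_norm_le_iff_of_nonneg hR0]
        intro k
        rw [Real.norm_eq_abs]; exact hb3 k
  have hScompact : IsCompact S := Metric.isCompact_of_isClosed_isBounded hclosed hbdd
  have hSne : S.Nonempty := ⟨(0,0,0), hfeas0, le_refl _⟩
  obtain ⟨p, hpS, hpmin⟩ := hScompact.exists_isMinOn hSne hcont.continuousOn
  have hpmin' : ∀ q ∈ S, f p ≤ f q := fun q hq => hpmin hq
  have hpglobal : ∀ q, Feasible n q → f p ≤ f q := by
    intro q hq
    by_cases hcase : f q ≤ f (0,0,0)
    · exact hpmin' q ⟨hq, hcase⟩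
    · exact le_trans (hpmin' _ ⟨hfeas0, le_refl _⟩) (le_of_not_ge hcase)
  refine ⟨p, ⟨hpS.1, hpglobal⟩, ?_⟩
  -- uniqueness
  rintro q ⟨hqfeas, hqmin⟩
  have hpfeas := hpS.1
  have heq : f q = f p := le_antisymm (hqmin p hpfeas) (hpglobal q hqfeas)
  -- midpoint
  set m : ℝ × ℝ × (Fin n → ℝ) :=
    ((p.1 + q.1)/2, (p.2.1 + q.2.1)/2, fun k => (p.2.2 k + q.2.2 k)/2) with hm
  have hstep : ∑ k, |(p.2.2 k + q.2.2 k)/2| ≤ (∑ k, |p.2.2 k| + ∑ k, |q.2.2 k|)/2 := by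
    calc ∑ k, |(p.2.2 k + q.2.2 k)/2| ≤ ∑ k, (|p.2.2 k| + |q.2.2 k|)/2 := by
          refine Finset.sum_le_sum fun k _ => ?_
          rw [abs_div, abs_two]
          exact div_le_div_of_nonneg_right (abs_add_le _ _) (by norm_num)
      _ = (∑ k, |p.2.2 k| + ∑ k, |q.2.2 k|)/2 := by
          rw [← Finset.sum_add_distrib, Finset.sum_div]
  have hmfeas : Feasible n m := by
    obtain ⟨hp1, hp2, hp3⟩ := hpfeas
    obtain ⟨hq1, hq2, hq3⟩ := hqfeas
    refine ⟨?_, ?_, ?_⟩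
    · simp only [hm]; linarith
    · simp only [hm]; linarith
    · simp only [hm]
      linarith [hstep]
  have hterm2 : ∑ k, (z k - (p.2.2 k + q.2.2 k)/2)^2
      = (∑ k, (z k - p.2.2 k)^2)/2 + (∑ k, (z k - q.2.2 k)^2)/2
        - (∑ k, (p.2.2 k - q.2.2 k)^2)/4 := by
    rw [Finset.sum_div, Finset.sum_div, Finset.sum_div, ← Finset.sum_add_distrib,
      ← Finset.sum_sub_distrib]
    exact Finset.sum_congr rfl fun k _ => by ring
  have hfm : f m ≤ (f p + f q)/2 - (1/8)*((p.1-p.2.1)-(q.1-q.2.1))^2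
      - (1/8)*(∑ k, (p.2.2 k - q.2.2 k)^2) := by
    have habsmul : lam2 * ∑ k, |(p.2.2 k + q.2.2 k)/2|
        ≤ lam2 * ((∑ k, |p.2.2 k| + ∑ k, |q.2.2 k|)/2) :=
      mul_le_mul_of_nonneg_left hstep h2
    have hq1 : (1/2)*(w - ((p.1+q.1)/2 - (p.2.1+q.2.1)/2))^2
        = (1/4)*(w - (p.1 - p.2.1))^2 + (1/4)*(w - (q.1 - q.2.1))^2
          - (1/8)*((p.1-p.2.1)-(q.1-q.2.1))^2 := by ring
    simp only [hfdef, objFn, hm]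
    rw [hterm2]
    linarith [habsmul, hq1.le, hq1.ge]
  have hple : f p ≤ f m := hpglobal m hmfeas
  have hzero : ((p.1-p.2.1)-(q.1-q.2.1))^2 + (∑ k, (p.2.2 k - q.2.2 k)^2) ≤ 0 := by
    linarith [hfm, hple, heq.le, heq.ge]
  have hSnn : (0:ℝ) ≤ ∑ k, (p.2.2 k - q.2.2 k)^2 :=
    Finset.sum_nonneg fun k _ => sq_nonneg _
  have hd : p.1 - p.2.1 = q.1 - q.2.1 := by
    have : ((p.1-p.2.1)-(q.1-q.2.1))^2 = 0 := by nlinarith [sq_nonneg ((p.1-p.2.1)-(q.1-q.2.1))]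
    have := pow_eq_zero_iff (n := 2) (by norm_num) |>.mp this
    linarith
  have hSzero : ∑ k, (p.2.2 k - q.2.2 k)^2 = 0 := by
    nlinarith [sq_nonneg ((p.1-p.2.1)-(q.1-q.2.1))]
  have hθ : ∀ k, p.2.2 k = q.2.2 k := by
    intro k
    have := (Finset.sum_eq_zero_iff_of_nonneg (fun j _ => sq_nonneg (p.2.2 j - q.2.2 j))).mp
      hSzero k (Finset.mem_univ k)
    have := pow_eq_zero_iff (n := 2) (by norm_num) |>.mp this
    linarith
  -- now use equality of objective values and lam1 > 0
  have e1 : ∑ k, (z k - q.2.2 k)^2 = ∑ k, (z k - p.2.2 k)^2 :=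
    Finset.sum_congr rfl fun k _ => by rw [hθ k]
  have e2 : ∑ k, |q.2.2 k| = ∑ k, |p.2.2 k| :=
    Finset.sum_congr rfl fun k _ => by rw [hθ k]
  have heq' := heq
  simp only [hfdef, objFn] at heq'
  rw [e1, e2, ← hd] at heq'
  have hsum_eq : q.1 + q.2.1 = p.1 + p.2.1 := by
    have h5 : lam1 * (q.1 + q.2.1) = lam1 * (p.1 + p.2.1) := by linarith
    exact mul_left_cancel₀ (ne_of_gt h1) h5
  have hq1p1 : q.1 = p.1 := by linarith
  have hq2p2 : q.2.1 = p.2.1 := by linarith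
  have hq3p3 : q.2.2 = p.2.2 := funext fun k => (hθ k).symm
  have hqeta : q = (q.1, q.2.1, q.2.2) := rfl
  rw [hqeta, hq1p1, hq2p2, hq3p3]
end

section
/- In the constrained problem: minimize (1/2)(w-(β⁺-β⁻))² + (1/2)‖z-θ‖² + λ(β⁺+β⁻) + λ‖θ‖₁ subject to β⁺,β⁻ ≥ 0 and ‖θ‖₁ ≤ β⁺+β⁻, with λ > 0, the unique solution never has β⁺ = 0 and β⁻ > 0 when w ≥ 0. -/
lemma sum_upd {n : ℕ} (G : Fin n → ℝ) (j : Fin n) (c : ℝ) :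
    ∑ k, Function.update G j c k = ∑ k, G k - G j + c := by
  rw [Finset.sum_update_of_mem (Finset.mem_univ j), Finset.sdiff_singleton_eq_erase,
    ← Finset.add_sum_erase _ G (Finset.mem_univ j)]
  ring

lemma abs_upd {n : ℕ} (θ : Fin n → ℝ) (j : Fin n) (v : ℝ) :
    ∑ k, |Function.update θ j v k| = ∑ k, |θ k| - |θ j| + |v| := by
  have h : (fun k => |Function.update θ j v k|)
      = Function.update (fun k => |θ k|) j (|v|) := by
    funext k
    by_cases hk : k = j <;> simp [Function.update, hk]
  rw [show (∑ k, |Function.update θ j v k|) = ∑ k, Function.update (fun k => |θ k|) j (|v|) k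
      from by rw [← h], sum_upd]

lemma sq_upd {n : ℕ} (z θ : Fin n → ℝ) (j : Fin n) (v : ℝ) :
    ∑ k, (z k - Function.update θ j v k)^2
      = ∑ k, (z k - θ k)^2 - (z j - θ j)^2 + (z j - v)^2 := by
  have h : (fun k => (z k - Function.update θ j v k)^2)
      = Function.update (fun k => (z k - θ k)^2) j ((z j - v)^2) := by
    funext k
    by_cases hk : k = j <;> simp [Function.update, hk]
  rw [show (∑ k, (z k - Function.update θ j v k)^2)
      = ∑ k, Function.update (fun k => (z k - θ k)^2) j ((z j - v)^2) k
      from by rw [← h], sum_upd]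

set_option maxHeartbeats 1000000 in
theorem stmt_11 (n : ℕ) (w : ℝ) (hw : 0 ≤ w) (z : Fin n → ℝ) (lam : ℝ) (hlam : 0 < lam)
    (p : ℝ × ℝ × (Fin n → ℝ)) (hfeas : Feasible n p)
    (hopt : ∀ q : ℝ × ℝ × (Fin n → ℝ), Feasible n q →
      objFn n lam lam w z p ≤ objFn n lam lam w z q) :
    ¬ (p.1 = 0 ∧ 0 < p.2.1) := by
  rintro ⟨hb0, hbpos⟩
  obtain ⟨hp1, hp2, hp3⟩ := hfeas
  set b := p.2.1 with hbdef
  set θ := p.2.2 with hθdef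
  have hpe : p = (p.1, b, θ) := rfl
  rw [hb0] at hpe hp3
  by_cases hθ0 : ∀ k, θ k = 0
  · -- θ = 0 : decrease β⁻
    have hsum : ∑ k, |θ k| = 0 := by simp [hθ0]
    set t := min b lam with htdef
    have ht : 0 < t := lt_min hbpos hlam
    have htb : t ≤ b := min_le_left _ _
    have htl : t ≤ lam := min_le_right _ _
    have hq := hopt (0, b - t, θ)
      ⟨le_refl 0, show (0:ℝ) ≤ b - t by linarith,
        show (∑ k, |θ k|) ≤ 0 + (b - t) by rw [hsum]; linarith⟩
    rw [hpe] at hq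
    simp only [objFn] at hq
    nlinarith [hq, ht, htb, htl, hbpos]
  · push_neg at hθ0
    obtain ⟨j, hj⟩ := hθ0
    obtain ⟨s, hs, hsθ⟩ : ∃ s : ℝ, (s = 1 ∨ s = -1) ∧ θ j = s * |θ j| := by
      rcases hj.lt_or_gt with h | h
      · exact ⟨-1, Or.inr rfl, by rw [abs_of_neg h]; ring⟩
      · exact ⟨1, Or.inl rfl, by rw [abs_of_pos h]; ring⟩
    have hs2 : s * s = 1 := by rcases hs with h | h <;> rw [h] <;> norm_num
    have hsabs : |s| = 1 := by rcases hs with h | h <;> rw [h] <;> norm_num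
    have habsj : 0 < |θ j| := abs_pos.mpr hj
    have hjle : |θ j| ≤ ∑ k, |θ k| :=
      Finset.single_le_sum (f := fun k => |θ k|) (fun k _ => abs_nonneg _) (Finset.mem_univ j)
    set S := s * (z j - θ j) with hSdef
    set c := w + b + 2 * lam with hcdef
    -- Step A: S ≥ c
    have hSc : c ≤ S := by
      by_contra hlt
      push_neg at hlt
      set t := min (|θ j|) ((c - S) / 2) with htdef
      have ht : 0 < t := lt_min habsj (by linarith)
      have ht1 : t ≤ |θ j| := min_le_left _ _
      have ht2 : t ≤ (c - S) / 2 := min_le_right _ _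
      have habs1 : |θ j - t * s| = |θ j| - t := by
        have h : θ j - t * s = s * (|θ j| - t) := by linear_combination hsθ
        rw [h, abs_mul, hsabs, one_mul, abs_of_nonneg (by linarith : (0:ℝ) ≤ |θ j| - t)]
      have hfq : Feasible n (0, b - t, Function.update θ j (θ j - t * s)) := by
        refine ⟨le_refl 0, show (0:ℝ) ≤ b - t by linarith, ?_⟩
        show (∑ k, |Function.update θ j (θ j - t * s) k|) ≤ 0 + (b - t)
        rw [abs_upd, habs1]
        linarith
      have hq := hopt _ hfq
      rw [hpe] at hq
      simp only [objFn] at hq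
      rw [abs_upd, habs1, sq_upd] at hq
      have hexp : (z j - (θ j - t * s))^2 = (z j - θ j)^2 + 2 * t * S + t^2 := by
        rw [hSdef]; nlinarith [hs2]
      rw [hexp] at hq
      nlinarith [hq, ht, ht2]
    -- Step B: grow β⁺ and θ j together
    set t := w + b with htdef
    have ht : 0 < t := by linarith
    have habs2 : |θ j + t * s| = |θ j| + t := by
      have h : θ j + t * s = s * (|θ j| + t) := by linear_combination hsθ
      rw [h, abs_mul, hsabs, one_mul, abs_of_nonneg (by linarith : (0:ℝ) ≤ |θ j| + t)]
    have hfq : Feasible n (t, b, Function.update θ j (θ j + t * s)) := by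
      refine ⟨le_of_lt ht, le_of_lt hbpos, ?_⟩
      show (∑ k, |Function.update θ j (θ j + t * s) k|) ≤ t + b
      rw [abs_upd, habs2]
      linarith
    have hq := hopt _ hfq
    rw [hpe] at hq
    simp only [objFn] at hq
    rw [abs_upd, habs2, sq_upd] at hq
    have hexp : (z j - (θ j + t * s))^2 = (z j - θ j)^2 - 2 * t * S + t^2 := by
      rw [hSdef]; nlinarith [hs2]
    rw [hexp] at hq
    nlinarith [hq, ht, hSc, hlam]
end

section
/- Consider the problem: minimize (1/2)(w-(β⁺-β⁻))² + (1/2)‖z-θ‖² + λ(β⁺+β⁻) + λ‖θ‖₁ subject to β⁺,β⁻ ≥ 0, ‖θ‖₁ ≤ β⁺+β⁻, with λ > 0 and w > 0. If ‖S(z,2λ)‖₁ > w, then the unique solution satisfies β⁺ - β⁻ = w and θ = S(z,2λ), with β⁺ + β⁻ = ‖S(z,2λ)‖₁. -/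
lemma softTh_cases (x c : ℝ) (hc : 0 < c) :
    (softTh x c = x - c ∧ c ≤ x) ∨ (softTh x c = x + c ∧ x ≤ -c) ∨
    (softTh x c = 0 ∧ |x| ≤ c) := by
  unfold softTh
  rcases le_or_gt (|x|) c with h | h
  · right; right
    rw [max_eq_right (by linarith)]
    simp [h]
  · rcases lt_trichotomy x 0 with hx | hx | hx
    · right; left
      rw [Real.sign_of_neg hx, max_eq_left (by linarith), abs_of_neg hx]
      constructor
      · ring
      · rw [abs_of_neg hx] at h; linarith
    · simp [hx] at h; linarith
    · left
      rw [Real.sign_of_pos hx, max_eq_left (by linarith), abs_of_pos hx]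
      constructor
      · ring
      · rw [abs_of_pos hx] at h; linarith

lemma softTh_key (x c t : ℝ) (hc : 0 < c) :
    (1/2)*(x - softTh x c)^2 + c*|softTh x c| + (1/2)*(t - softTh x c)^2
      ≤ (1/2)*(x - t)^2 + c*|t| := by
  rcases softTh_cases x c hc with ⟨hs, hx⟩ | ⟨hs, hx⟩ | ⟨hs, hx⟩ <;> rw [hs] <;>
    rcases abs_cases t with ⟨ht, ht'⟩ | ⟨ht, ht'⟩ <;> rw [ht]
  · rw [abs_of_nonneg (by linarith)]; nlinarith
  · rw [abs_of_nonneg (by linarith)]; nlinarith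
  · rw [abs_of_nonpos (by linarith)]; nlinarith
  · rw [abs_of_nonpos (by linarith)]; nlinarith
  · simp; rcases abs_cases x with ⟨h1, _⟩ | ⟨h1, _⟩ <;> rw [h1] at hx <;> nlinarith
  · simp; rcases abs_cases x with ⟨h1, _⟩ | ⟨h1, _⟩ <;> rw [h1] at hx <;> nlinarith

theorem stmt_13 (n : ℕ) (w : ℝ) (hw : 0 < w) (z : Fin n → ℝ) (lam : ℝ) (hlam : 0 < lam)
    (hbig : w < ∑ k, |softTh (z k) (2 * lam)|)
    (p : ℝ × ℝ × (Fin n → ℝ)) (hfeas : Feasible n p)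
    (hopt : ∀ q : ℝ × ℝ × (Fin n → ℝ), Feasible n q →
      objFn n lam lam w z p ≤ objFn n lam lam w z q) :
    p.1 - p.2.1 = w ∧ (∀ k, p.2.2 k = softTh (z k) (2 * lam)) ∧
      p.1 + p.2.1 = ∑ k, |softTh (z k) (2 * lam)| := by
  obtain ⟨hp1, hp2, hp3⟩ := hfeas
  set θ : Fin n → ℝ := fun k => softTh (z k) (2 * lam) with hθ
  set S : ℝ := ∑ k, |θ k| with hS
  have hq : Feasible n ((S + w)/2, (S - w)/2, θ) := by
    refine ⟨by simp only; linarith, by simp only; linarith, ?_⟩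
    simp only
    rw [← hS]; linarith
  have hle := hopt _ hq
  have hc : (0:ℝ) < 2 * lam := by linarith
  have hsum : ∑ k, ((1/2)*(z k - θ k)^2 + (2*lam)*|θ k| + (1/2)*(p.2.2 k - θ k)^2)
      ≤ ∑ k, ((1/2)*(z k - p.2.2 k)^2 + (2*lam)*|p.2.2 k|) :=
    Finset.sum_le_sum fun k _ => softTh_key (z k) (2*lam) (p.2.2 k) hc
  simp only [Finset.sum_add_distrib, ← Finset.mul_sum] at hsum
  unfold objFn at hle
  simp only at hle
  have hq1 : (S + w)/2 - (S - w)/2 = w := by ring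
  have hq2 : (S + w)/2 + (S - w)/2 = S := by ring
  rw [hq1, hq2] at hle
  have hB : (0:ℝ) ≤ ∑ k, (p.2.2 k - θ k)^2 :=
    Finset.sum_nonneg fun k _ => sq_nonneg _
  have hA : (0:ℝ) ≤ (w - (p.1 - p.2.1))^2 := sq_nonneg _
  have hC : (0:ℝ) ≤ lam * (p.1 + p.2.1 - ∑ k, |p.2.2 k|) :=
    mul_nonneg hlam.le (by linarith)
  -- combine everything
  have key : (1/2)*(w - (p.1 - p.2.1))^2 + (1/2)*(∑ k, (p.2.2 k - θ k)^2)
      + lam * (p.1 + p.2.1 - ∑ k, |p.2.2 k|) ≤ 0 := by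
    have hww : ((w:ℝ) - w)^2 = 0 := by ring
    rw [hww] at hle
    have e2 : 2*lam*(∑ k, |p.2.2 k|) = lam*(∑ k, |p.2.2 k|) + lam*(∑ k, |p.2.2 k|) := by ring
    have e3 : 2*lam*(∑ k, |θ k|) = lam*(∑ k, |θ k|) + lam*(∑ k, |θ k|) := by ring
    have e4 : lam*(p.1 + p.2.1 - ∑ k, |p.2.2 k|)
        = lam*(p.1 + p.2.1) - lam*(∑ k, |p.2.2 k|) := by ring
    linarith [hle, hsum, e2, e3, e4, hS]
  have hA0 : (w - (p.1 - p.2.1))^2 = 0 := by linarith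
  have hB0 : ∑ k, (p.2.2 k - θ k)^2 = 0 := by linarith
  have hC0 : p.1 + p.2.1 = ∑ k, |p.2.2 k| := by nlinarith
  have h1 : p.1 - p.2.1 = w := by
    have := pow_eq_zero_iff (n := 2) (by norm_num) |>.mp hA0; linarith
  have h2 : ∀ k, p.2.2 k = θ k := by
    intro k
    have := (Finset.sum_eq_zero_iff_of_nonneg (fun k _ => sq_nonneg (p.2.2 k - θ k))).mp hB0 k (Finset.mem_univ k)
    have := pow_eq_zero_iff (n := 2) (by norm_num) |>.mp this
    linarith
  refine ⟨h1, h2, ?_⟩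
  rw [hC0]
  exact Finset.sum_congr rfl fun k _ => by rw [h2 k]
end

section
/- Consider the problem: minimize (1/2)(w-(β⁺-β⁻))² + (1/2)‖z-θ‖² + λ(β⁺+β⁻) + λ‖θ‖₁ subject to β⁺,β⁻ ≥ 0, ‖θ‖₁ ≤ β⁺+β⁻, with λ > 0 and w ≥ 0. The solution is identically zero (β⁺=β⁻=0, θ=0) if and only if λ ≥ max{w, (‖z‖_∞ + w)/2}. -/
theorem stmt_14 (n : ℕ) (w : ℝ) (hw : 0 ≤ w) (z : Fin n → ℝ) (lam : ℝ) (hlam : 0 < lam) :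
    (∀ q : ℝ × ℝ × (Fin n → ℝ), Feasible n q →
        objFn n lam lam w z (0, 0, 0) ≤ objFn n lam lam w z q)
      ↔ max w (((⨆ k, |z k|) + w) / 2) ≤ lam := by
  classical
  set M := ⨆ k, |z k| with hM
  constructor
  · intro h
    have hwlam : w ≤ lam := by
      by_contra hlt
      push_neg at hlt
      have hfeas : Feasible n (w - lam, 0, 0) := by
        refine ⟨?_, le_refl 0, by simp; linarith⟩
        show (0:ℝ) ≤ w - lam
        linarith
      have hk := h _ hfeas
      simp only [objFn] at hk
      simp only [Prod.fst, Prod.snd, Pi.zero_apply, sub_zero, abs_zero,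
        Finset.sum_const_zero, add_zero, mul_zero, zero_sub, sub_neg_eq_add] at hk
      nlinarith [sq_nonneg (w - lam)]
    have hzk : ∀ k, w + |z k| ≤ 2 * lam := by
      intro k
      by_contra hlt
      push_neg at hlt
      set t := (w + |z k| - 2 * lam) / 2 with ht
      have ht0 : 0 < t := by rw [ht]; linarith
      set θ : Fin n → ℝ := fun j => if j = k then (if 0 ≤ z k then t else -t) else 0
        with hθ
      have habs : ∀ j, |θ j| = if j = k then t else 0 := by
        intro j
        by_cases hj : j = k
        · subst hj
          simp only [hθ, if_pos rfl]
          split_ifs with hz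
          · exact abs_of_pos ht0
          · rw [abs_neg]; exact abs_of_pos ht0
        · simp [hθ, hj]
      have hsumabs : ∑ j, |θ j| = t := by
        simp only [habs]
        simp
      have hfeas : Feasible n (t, 0, θ) := by
        refine ⟨ht0.le, le_refl 0, ?_⟩
        simp only [Prod.snd, Prod.fst]
        rw [hsumabs]; linarith
      have hsum2 : ∑ j, (z j - θ j)^2 = (∑ j, (z j)^2) + (t^2 - 2 * |z k| * t) := by
        have hterm : ∀ j, (z j - θ j)^2
            = (z j)^2 + (if j = k then t^2 - 2 * |z k| * t else 0) := by
          intro j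
          by_cases hj : j = k
          · subst hj
            simp only [hθ, if_pos rfl]
            split_ifs with hz
            · rw [abs_of_nonneg hz]; ring
            · rw [abs_of_neg (lt_of_not_ge hz)]; ring
          · simp [hθ, hj]
        simp only [hterm]
        rw [Finset.sum_add_distrib, Finset.sum_ite_eq' Finset.univ k]
        simp
      have hk2 := h _ hfeas
      simp only [objFn] at hk2
      simp only [Prod.fst, Prod.snd, Pi.zero_apply, sub_zero, abs_zero,
        Finset.sum_const_zero, add_zero, mul_zero, zero_sub, sub_neg_eq_add] at hk2
      rw [hsum2, hsumabs] at hk2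
      nlinarith [mul_pos ht0 ht0]
    rw [max_le_iff]
    refine ⟨hwlam, ?_⟩
    rcases Nat.eq_zero_or_pos n with hn | hn
    · subst hn
      have hM0 : M = 0 := by
        rw [hM]
        exact Real.iSup_of_isEmpty _
      rw [hM0]; linarith
    · haveI : Nonempty (Fin n) := Fin.pos_iff_nonempty.mp hn
      have hMle : M ≤ 2 * lam - w := by
        rw [hM]
        exact ciSup_le fun k => by have := hzk k; linarith
      linarith
  · intro hle q hq
    obtain ⟨a, b, θ⟩ := q
    obtain ⟨ha, hb, hT⟩ := hq
    simp only [Prod.fst, Prod.snd] at ha hb hT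
    have hwlam : w ≤ lam := le_trans (le_max_left _ _) hle
    have h2lam : M + w ≤ 2 * lam := by
      have := le_trans (le_max_right w ((M + w)/2)) hle
      linarith
    have hzM : ∀ k, |z k| ≤ M := fun k => by
      rw [hM]
      exact le_ciSup (Set.Finite.bddAbove (Set.finite_range fun j => |z j|)) k
    have key : (∑ k, (z k)^2) - (∑ k, (z k - θ k)^2) ≤ 2 * M * ∑ k, |θ k| := by
      rw [← Finset.sum_sub_distrib, Finset.mul_sum]
      apply Finset.sum_le_sum
      intro k _
      have h1 : z k * θ k ≤ |z k| * |θ k| := by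
        rw [← abs_mul]; exact le_abs_self _
      have h2 := hzM k
      nlinarith [abs_nonneg (θ k), sq_nonneg (θ k), sq_abs (θ k), abs_nonneg (z k)]
    have hT0 : 0 ≤ ∑ k, |θ k| := Finset.sum_nonneg fun _ _ => abs_nonneg _
    simp only [objFn, Prod.fst, Prod.snd, Pi.zero_apply, sub_zero, abs_zero,
      Finset.sum_const_zero, add_zero, mul_zero, zero_sub, sub_neg_eq_add]
    rcases le_total M lam with hc | hc
    · nlinarith [mul_nonneg (sub_nonneg.mpr hc) hT0, sq_nonneg (a - b),
        mul_nonneg (sub_nonneg.mpr hwlam) ha, mul_nonneg hw hb,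
        mul_nonneg hlam.le hb, mul_nonneg hlam.le ha]
    · have hmul : (M - lam) * (∑ k, |θ k|) ≤ (M - lam) * (a + b) :=
        mul_le_mul_of_nonneg_left hT (sub_nonneg.mpr hc)
      nlinarith [sq_nonneg (a - b), mul_nonneg hw hb, mul_nonneg ha (by linarith : (0:ℝ) ≤ 2*lam - w - M), mul_nonneg hb (by linarith : (0:ℝ) ≤ 2*lam - M)]
end

section
/- For λ > 0, w ≥ 0, z ∈ ℝⁿ, let (β⁺(λ), β⁻(λ), θ(λ)) be the unique solution of: minimize (1/2)(w-(β⁺-β⁻))² + (1/2)‖z-θ‖² + λ(β⁺+β⁻) + λ‖θ‖₁ subject to β⁺,β⁻ ≥ 0, ‖θ‖₁ ≤ β⁺+β⁻. Then for each coordinate k, the map λ ↦ |θₖ(λ)| is non-increasing on (0,∞). -/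
private lemma feas_mk (n : ℕ) (P M : ℝ) (A : Fin n → ℝ) :
    Feasible n (P, M, A) ↔ 0 ≤ P ∧ 0 ≤ M ∧ (∑ j, |A j|) ≤ P + M := Iff.rfl

private lemma objFn_mk (n : ℕ) (lam w : ℝ) (z : Fin n → ℝ) (P M : ℝ) (A : Fin n → ℝ) :
    objFn n lam lam w z (P, M, A) =
      (1/2) * (w - (P - M))^2 + (1/2) * (∑ j, (z j - A j)^2)
        + lam * (P + M) + lam * ∑ j, |A j| := rfl

private lemma aux_nonneg (c δ₀ : ℝ) (hδ₀ : 0 < δ₀)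
    (h : ∀ δ : ℝ, 0 < δ → δ ≤ δ₀ → 0 ≤ c * δ + 2 * δ ^ 2) : 0 ≤ c := by
  by_contra hc
  push_neg at hc
  have hc4 : 0 < -c / 4 := by linarith
  have hδpos : 0 < min δ₀ (-c / 4) := lt_min hδ₀ hc4
  have h1 := h _ hδpos (min_le_left _ _)
  have h2 : min δ₀ (-c / 4) ≤ -c / 4 := min_le_right _ _
  nlinarith [mul_le_mul_of_nonneg_left h2 hδpos.le, mul_pos hδpos hδpos]

private lemma sum_update_eq {n : ℕ} (A : Fin n → ℝ) (k : Fin n) (v : ℝ)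
    (g : Fin n → ℝ → ℝ) :
    (∑ j, g j (Function.update A k v j)) = g k v - g k (A k) + ∑ j, g j (A j) := by
  have h1 : ∀ j, g j (Function.update A k v j)
      = Function.update (fun i => g i (A i)) k (g k v) j :=
    fun j => Function.apply_update g A k v j
  rw [Finset.sum_congr rfl fun j _ => h1 j]
  rw [Finset.sum_update_of_mem (Finset.mem_univ k)]
  rw [← Finset.add_sum_erase Finset.univ (fun i => g i (A i)) (Finset.mem_univ k)]
  rw [Finset.sdiff_singleton_eq_erase]
  ring

private lemma exists_sign (x : ℝ) : ∃ e : ℝ, e * x = |x| ∧ e ^ 2 = 1 ∧ |e| = 1 := by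
  rcases le_or_gt 0 x with h | h
  · exact ⟨1, by rw [one_mul, abs_of_nonneg h], by norm_num, by norm_num⟩
  · exact ⟨-1, by rw [abs_of_neg h]; ring, by norm_num, by norm_num⟩

section PerturbFacts

variable {n : ℕ} {lam w : ℝ} {z : Fin n → ℝ} {P M : ℝ} {A : Fin n → ℝ}

private lemma fact_bplus
    (hfe : Feasible n (P, M, A))
    (hopt : ∀ q, Feasible n q → objFn n lam lam w z (P, M, A) ≤ objFn n lam lam w z q) :
    w - (P - M) ≤ lam := by
  obtain ⟨h1, h2, h3⟩ := (feas_mk n P M A).mp hfe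
  have key : ∀ δ : ℝ, 0 < δ → δ ≤ 1 → 0 ≤ (lam - (w - (P - M))) * δ + 2 * δ ^ 2 := by
    intro δ hδ _
    have hq : Feasible n (P + δ, M, A) :=
      (feas_mk n _ _ _).mpr ⟨by linarith, h2, by linarith⟩
    have h := hopt _ hq
    have heq : objFn n lam lam w z (P + δ, M, A)
        = objFn n lam lam w z (P, M, A) + ((lam - (w - (P - M))) * δ + δ ^ 2 / 2) := by
      rw [objFn_mk, objFn_mk]; ring
    nlinarith [sq_nonneg δ]
  linarith [aux_nonneg _ 1 one_pos key]

private lemma fact_s_le (hP : 0 < P)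
    (hfe : Feasible n (P, M, A))
    (hopt : ∀ q, Feasible n q → objFn n lam lam w z (P, M, A) ≤ objFn n lam lam w z q) :
    P - M ≤ w := by
  obtain ⟨h1, h2, h3⟩ := (feas_mk n P M A).mp hfe
  have key : ∀ δ : ℝ, 0 < δ → δ ≤ P → 0 ≤ (2 * (w - (P - M))) * δ + 2 * δ ^ 2 := by
    intro δ hδ hδP
    have hq : Feasible n (P - δ, M + δ, A) :=
      (feas_mk n _ _ _).mpr ⟨by linarith, by linarith, by linarith⟩
    have h := hopt _ hq
    have heq : objFn n lam lam w z (P - δ, M + δ, A)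
        = objFn n lam lam w z (P, M, A) + ((2 * (w - (P - M))) * δ + 2 * δ ^ 2) := by
      rw [objFn_mk, objFn_mk]; ring
    linarith
  linarith [aux_nonneg _ P hP key]

private lemma fact_s_ge (hM : 0 < M)
    (hfe : Feasible n (P, M, A))
    (hopt : ∀ q, Feasible n q → objFn n lam lam w z (P, M, A) ≤ objFn n lam lam w z q) :
    w ≤ P - M := by
  obtain ⟨h1, h2, h3⟩ := (feas_mk n P M A).mp hfe
  have key : ∀ δ : ℝ, 0 < δ → δ ≤ M → 0 ≤ (-2 * (w - (P - M))) * δ + 2 * δ ^ 2 := by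
    intro δ hδ hδM
    have hq : Feasible n (P + δ, M - δ, A) :=
      (feas_mk n _ _ _).mpr ⟨by linarith, by linarith, by linarith⟩
    have h := hopt _ hq
    have heq : objFn n lam lam w z (P + δ, M - δ, A)
        = objFn n lam lam w z (P, M, A) + ((-2 * (w - (P - M))) * δ + 2 * δ ^ 2) := by
      rw [objFn_mk, objFn_mk]; ring
    linarith
  linarith [aux_nonneg _ M hM key]

private lemma fact_M0 (hw : 0 ≤ w) (hP : P = 0)
    (hfe : Feasible n (P, M, A))
    (hopt : ∀ q, Feasible n q → objFn n lam lam w z (P, M, A) ≤ objFn n lam lam w z q) :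
    M = 0 := by
  obtain ⟨h1, h2, h3⟩ := (feas_mk n P M A).mp hfe
  rcases h2.eq_or_lt with hM | hM
  · exact hM.symm
  · have := fact_s_ge hM hfe hopt
    rw [hP] at this
    linarith

private lemma fact_s_bounds (hw : 0 ≤ w)
    (hfe : Feasible n (P, M, A))
    (hopt : ∀ q, Feasible n q → objFn n lam lam w z (P, M, A) ≤ objFn n lam lam w z q) :
    0 ≤ P - M ∧ P - M ≤ w := by
  obtain ⟨h1, h2, h3⟩ := (feas_mk n P M A).mp hfe
  rcases h1.eq_or_lt with hP | hP
  · have hM := fact_M0 hw hP.symm hfe hopt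
    constructor <;> [linarith; linarith]
  · have hsle := fact_s_le hP hfe hopt
    rcases h2.eq_or_lt with hM | hM
    · exact ⟨by linarith, hsle⟩
    · have := fact_s_ge hM hfe hopt
      exact ⟨by linarith, hsle⟩

private lemma fact_slack (hP : 0 < P) (hsl : (∑ j, |A j|) < P + M)
    (hfe : Feasible n (P, M, A))
    (hopt : ∀ q, Feasible n q → objFn n lam lam w z (P, M, A) ≤ objFn n lam lam w z q) :
    lam ≤ w - (P - M) := by
  obtain ⟨h1, h2, h3⟩ := (feas_mk n P M A).mp hfe
  have hδ₀ : 0 < min P (P + M - ∑ j, |A j|) := lt_min hP (by linarith)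
  have key : ∀ δ : ℝ, 0 < δ → δ ≤ min P (P + M - ∑ j, |A j|) →
      0 ≤ ((w - (P - M)) - lam) * δ + 2 * δ ^ 2 := by
    intro δ hδ hδle
    have hδP : δ ≤ P := le_trans hδle (min_le_left _ _)
    have hδsl : δ ≤ P + M - ∑ j, |A j| := le_trans hδle (min_le_right _ _)
    have hq : Feasible n (P - δ, M, A) :=
      (feas_mk n _ _ _).mpr ⟨by linarith, h2, by linarith⟩
    have h := hopt _ hq
    have heq : objFn n lam lam w z (P - δ, M, A)
        = objFn n lam lam w z (P, M, A) + (((w - (P - M)) - lam) * δ + δ ^ 2 / 2) := by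
      rw [objFn_mk, objFn_mk]; ring
    nlinarith [sq_nonneg δ]
  linarith [aux_nonneg _ _ hδ₀ key]

private lemma fact_grow (hlam : 0 < lam) (k : Fin n)
    (hfe : Feasible n (P, M, A))
    (hopt : ∀ q, Feasible n q → objFn n lam lam w z (P, M, A) ≤ objFn n lam lam w z q) :
    |z k| - |A k| ≤ 2 * lam - (w - (P - M)) := by
  obtain ⟨h1, h2, h3⟩ := (feas_mk n P M A).mp hfe
  obtain ⟨e, hezk, he2, heabs⟩ := exists_sign (z k)
  have heAk : e * A k ≤ |A k| := by
    calc e * A k ≤ |e * A k| := le_abs_self _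
    _ = |A k| := by rw [abs_mul, heabs, one_mul]
  have key : ∀ δ : ℝ, 0 < δ → δ ≤ 1 →
      0 ≤ (2 * lam - (w - (P - M)) - (|z k| - |A k|)) * δ + 2 * δ ^ 2 := by
    intro δ hδ _
    have habs : |A k + δ * e| ≤ |A k| + δ := by
      calc |A k + δ * e| ≤ |A k| + |δ * e| := abs_add_le _ _
      _ = |A k| + δ := by rw [abs_mul, heabs, mul_one, abs_of_pos hδ]
    have hsum1 : (∑ j, (z j - Function.update A k (A k + δ * e) j)^2)
        = (z k - (A k + δ * e))^2 - (z k - A k)^2 + ∑ j, (z j - A j)^2 :=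
      sum_update_eq A k _ (fun j x => (z j - x)^2)
    have hsum2 : (∑ j, |Function.update A k (A k + δ * e) j|)
        = |A k + δ * e| - |A k| + ∑ j, |A j| :=
      sum_update_eq A k _ (fun _ x => |x|)
    have hq : Feasible n (P + δ, M, Function.update A k (A k + δ * e)) := by
      refine (feas_mk n _ _ _).mpr ⟨by linarith, h2, ?_⟩
      rw [hsum2]; linarith
    have h := hopt _ hq
    have heq : objFn n lam lam w z (P + δ, M, Function.update A k (A k + δ * e))
        = objFn n lam lam w z (P, M, A) + ((lam - (w - (P - M))) * δ + δ ^ 2 / 2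
            + (1/2) * ((z k - (A k + δ * e))^2 - (z k - A k)^2)
            + lam * (|A k + δ * e| - |A k|)) := by
      rw [objFn_mk, objFn_mk, hsum1, hsum2]; ring
    have hexp : (z k - (A k + δ * e))^2
        = (z k - A k)^2 - 2 * δ * |z k| + 2 * δ * (e * A k) + δ ^ 2 := by
      linear_combination (-2 * δ) * hezk + δ ^ 2 * he2
    nlinarith [mul_le_mul_of_nonneg_left habs hlam.le,
      mul_nonneg hδ.le (sub_nonneg.mpr heAk), sq_nonneg δ]
  linarith [aux_nonneg _ 1 one_pos key]

private lemma fact_shrink (hlam : 0 < lam) (hP : 0 < P) (k : Fin n) (hA : A k ≠ 0)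
    (hfe : Feasible n (P, M, A))
    (hopt : ∀ q, Feasible n q → objFn n lam lam w z (P, M, A) ≤ objFn n lam lam w z q) :
    2 * lam - (w - (P - M)) ≤ |z k| - |A k| := by
  obtain ⟨h1, h2, h3⟩ := (feas_mk n P M A).mp hfe
  obtain ⟨sg, hsga, hsg2, hsgabs⟩ := exists_sign (A k)
  have hsgz : sg * z k ≤ |z k| := by
    calc sg * z k ≤ |sg * z k| := le_abs_self _
    _ = |z k| := by rw [abs_mul, hsgabs, one_mul]
  have hAkpos : 0 < |A k| := abs_pos.mpr hA
  have hAkeq : A k = sg * |A k| := by linear_combination sg * hsga - A k * hsg2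
  have hδ₀ : 0 < min P |A k| := lt_min hP hAkpos
  have key : ∀ δ : ℝ, 0 < δ → δ ≤ min P |A k| →
      0 ≤ ((w - (P - M)) - 2 * lam + sg * z k - |A k|) * δ + 2 * δ ^ 2 := by
    intro δ hδ hδle
    have hδP : δ ≤ P := le_trans hδle (min_le_left _ _)
    have hδA : δ ≤ |A k| := le_trans hδle (min_le_right _ _)
    have h5 : A k - δ * sg = sg * (|A k| - δ) := by linear_combination hAkeq
    have habs : |A k - δ * sg| = |A k| - δ := by
      rw [h5, abs_mul, hsgabs, one_mul, abs_of_nonneg (by linarith : (0:ℝ) ≤ |A k| - δ)]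
    have hsum1 : (∑ j, (z j - Function.update A k (A k - δ * sg) j)^2)
        = (z k - (A k - δ * sg))^2 - (z k - A k)^2 + ∑ j, (z j - A j)^2 :=
      sum_update_eq A k _ (fun j x => (z j - x)^2)
    have hsum2 : (∑ j, |Function.update A k (A k - δ * sg) j|)
        = |A k - δ * sg| - |A k| + ∑ j, |A j| :=
      sum_update_eq A k _ (fun _ x => |x|)
    have hq : Feasible n (P - δ, M, Function.update A k (A k - δ * sg)) := by
      refine (feas_mk n _ _ _).mpr ⟨by linarith, h2, ?_⟩
      rw [hsum2, habs]; linarith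
    have h := hopt _ hq
    have heq : objFn n lam lam w z (P - δ, M, Function.update A k (A k - δ * sg))
        = objFn n lam lam w z (P, M, A) + (((w - (P - M)) - lam) * δ + δ ^ 2 / 2
            + (1/2) * ((z k - (A k - δ * sg))^2 - (z k - A k)^2)
            + lam * (|A k - δ * sg| - |A k|)) := by
      rw [objFn_mk, objFn_mk, hsum1, hsum2]; ring
    have hexp : (z k - (A k - δ * sg))^2
        = (z k - A k)^2 + 2 * δ * (sg * z k) - 2 * δ * |A k| + δ ^ 2 := by
      linear_combination (-2 * δ) * hsga + δ ^ 2 * hsg2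
    rw [habs] at heq
    nlinarith [sq_nonneg δ]
  have hc := aux_nonneg _ _ hδ₀ key
  linarith

end PerturbFacts

private lemma mu_mono (n : ℕ) (w : ℝ) (hw : 0 ≤ w) (z : Fin n → ℝ)
    (sol : ℝ → ℝ × ℝ × (Fin n → ℝ))
    (hsol : ∀ lam : ℝ, 0 < lam → Feasible n (sol lam) ∧
      ∀ q : ℝ × ℝ × (Fin n → ℝ), Feasible n q →
        objFn n lam lam w z (sol lam) ≤ objFn n lam lam w z q)
    (lam1 lam2 : ℝ) (h1 : 0 < lam1) (h2 : 0 < lam2) (hle : lam1 ≤ lam2) :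
    2 * lam1 - (w - ((sol lam1).1 - (sol lam1).2.1))
      ≤ 2 * lam2 - (w - ((sol lam2).1 - (sol lam2).2.1)) := by
  obtain ⟨hfe1, hopt1⟩ := hsol lam1 h1
  obtain ⟨hfe2, hopt2⟩ := hsol lam2 h2
  obtain ⟨hP1n, hM1n, hT1⟩ := (feas_mk n _ _ _).mp hfe1
  obtain ⟨hP2n, hM2n, hT2⟩ := (feas_mk n _ _ _).mp hfe2
  have hb1 := fact_s_bounds hw hfe1 hopt1
  have hb2 := fact_s_bounds hw hfe2 hopt2
  have hw2 := fact_bplus hfe2 hopt2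
  rcases hM2n.eq_or_lt with hM2 | hM2
  · -- M2 = 0
    by_cases hsl : (∑ j, |(sol lam1).2.2 j|) < (sol lam1).1 + (sol lam1).2.1
    · rcases hP1n.eq_or_lt with hP1 | hP1
      · have hM1 := fact_M0 hw hP1.symm hfe1 hopt1
        have hTnn : 0 ≤ ∑ j, |(sol lam1).2.2 j| :=
          Finset.sum_nonneg fun j _ => abs_nonneg _
        rw [← hP1, hM1] at hsl
        linarith
      · have := fact_slack hP1 hsl hfe1 hopt1
        linarith
    · have hT1eq : (∑ j, |(sol lam1).2.2 j|) = (sol lam1).1 + (sol lam1).2.1 :=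
        le_antisymm hT1 (not_lt.1 hsl)
      by_contra hcon
      push_neg at hcon
      have hTT : (∑ j, |(sol lam1).2.2 j|) ≤ ∑ j, |(sol lam2).2.2 j| := by
        rcases hP1n.eq_or_lt with hP1 | hP1
        · have hM1 := fact_M0 hw hP1.symm hfe1 hopt1
          have : (∑ j, |(sol lam1).2.2 j|) = 0 := by rw [hT1eq, ← hP1, hM1]; ring
          rw [this]
          exact Finset.sum_nonneg fun j _ => abs_nonneg _
        · apply Finset.sum_le_sum
          intro j _
          by_cases hAj : (sol lam1).2.2 j = 0
          · rw [hAj, abs_zero]; exact abs_nonneg _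
          · have hup := fact_shrink h1 hP1 j hAj hfe1 hopt1
            have hlo := fact_grow h2 j hfe2 hopt2
            linarith
      linarith
  · -- 0 < M2 : s2 = w
    have hge := fact_s_ge hM2 hfe2 hopt2
    linarith [hb1.2, hb2.2]

theorem stmt_15 (n : ℕ) (w : ℝ) (hw : 0 ≤ w) (z : Fin n → ℝ)
    (sol : ℝ → ℝ × ℝ × (Fin n → ℝ))
    (hsol : ∀ lam : ℝ, 0 < lam → Feasible n (sol lam) ∧
      ∀ q : ℝ × ℝ × (Fin n → ℝ), Feasible n q →
        objFn n lam lam w z (sol lam) ≤ objFn n lam lam w z q) :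
    ∀ k : Fin n, AntitoneOn (fun lam => |(sol lam).2.2 k|) (Set.Ioi (0:ℝ)) := by
  intro k lam1 hm1 lam2 hm2 hle
  simp only [Set.mem_Ioi] at hm1 hm2
  obtain ⟨hfe1, hopt1⟩ := hsol lam1 hm1
  obtain ⟨hfe2, hopt2⟩ := hsol lam2 hm2
  show |(sol lam2).2.2 k| ≤ |(sol lam1).2.2 k|
  by_cases hA2 : (sol lam2).2.2 k = 0
  · rw [hA2, abs_zero]; exact abs_nonneg _
  · obtain ⟨hP2n, hM2n, hT2⟩ := (feas_mk n _ _ _).mp hfe2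
    rcases hP2n.eq_or_lt with hP2 | hP2
    · exfalso
      have hM2 := fact_M0 hw hP2.symm hfe2 hopt2
      have hsingle : |(sol lam2).2.2 k| ≤ ∑ j, |(sol lam2).2.2 j| :=
        Finset.single_le_sum (f := fun j => |(sol lam2).2.2 j|) (fun j _ => abs_nonneg _) (Finset.mem_univ k)
      have hpos := abs_pos.mpr hA2
      rw [← hP2, hM2] at hT2
      linarith
    · have hup := fact_shrink hm2 hP2 k hA2 hfe2 hopt2
      have hlo := fact_grow hm1 k hfe1 hopt1
      have hmu := mu_mono n w hw z sol hsol lam1 lam2 hm1 hm2 hle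
      linarith
end

section
/- With ν̂ and ν̂ₖ the activation points of the hierarchy-constrained problem as in the paper (ν̂ = max{w, (w+‖z‖_∞)/2}, ν̂ₖ = min{|zₖ|, |zₖ|/2 + max(w - ‖S(z,|zₖ|)‖₁,0)/2}), one has ν̂ₖ ≤ ν̂ for every k (weak hierarchy: no interaction activates before its main effect), and |zₖ|/2 ≤ ν̂ₖ ≤ |zₖ| (interactions are shrunk by at most a factor of 2). -/
theorem stmt_18 (n : ℕ) (w : ℝ) (hw : 0 ≤ w) (z : Fin n → ℝ) (k : Fin n) :
    min (|z k|) (|z k| / 2 + max (w - ∑ l, max (|z l| - |z k|) 0) 0 / 2)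
        ≤ max w ((w + ⨆ l, |z l|) / 2) ∧
    |z k| / 2 ≤ min (|z k|) (|z k| / 2 + max (w - ∑ l, max (|z l| - |z k|) 0) 0 / 2) ∧
    min (|z k|) (|z k| / 2 + max (w - ∑ l, max (|z l| - |z k|) 0) 0 / 2) ≤ |z k| := by
  have hS : (0:ℝ) ≤ ∑ l, max (|z l| - |z k|) 0 :=
    Finset.sum_nonneg fun l _ => le_max_right _ _
  have hsup : |z k| ≤ ⨆ l, |z l| :=
    le_ciSup (Set.Finite.bddAbove (Set.finite_range fun l => |z l|)) k
  refine ⟨?_, ?_, min_le_left _ _⟩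
  · have h1 : max (w - ∑ l, max (|z l| - |z k|) 0) 0 ≤ w := by
      apply max_le (by linarith) hw
    calc min (|z k|) (|z k| / 2 + max (w - ∑ l, max (|z l| - |z k|) 0) 0 / 2)
        ≤ |z k| / 2 + max (w - ∑ l, max (|z l| - |z k|) 0) 0 / 2 := min_le_right _ _
      _ ≤ (w + ⨆ l, |z l|) / 2 := by linarith
      _ ≤ max w ((w + ⨆ l, |z l|) / 2) := le_max_right _ _
  · have := abs_nonneg (z k)
    have := le_max_right (w - ∑ l, max (|z l| - |z k|) 0) 0
    simp only [le_min_iff]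
    constructor <;> linarith
end

section
/- If w < ‖z‖_∞ and k is an index achieving |zₖ| = ‖z‖_∞, then the interaction activation point ν̂ₖ = min{|zₖ|, |zₖ|/2 + max(w - ‖S(z,|zₖ|)‖₁,0)/2} equals the main-effect activation point ν̂ = (w + ‖z‖_∞)/2; i.e., the largest interaction enters the model at exactly the same value of λ as the main effect. -/
theorem stmt_19 (n : ℕ) (w : ℝ) (hw : 0 ≤ w) (z : Fin n → ℝ) (k : Fin n)
    (hwz : w < ⨆ l, |z l|) (hk : |z k| = ⨆ l, |z l|)
    (huniq : ∀ l : Fin n, l ≠ k → |z l| < ⨆ m, |z m|) :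
    min (|z k|) (|z k| / 2 + max (w - ∑ l, max (|z l| - |z k|) 0) 0 / 2)
      = (w + ⨆ l, |z l|) / 2 := by
  have hsum : (∑ l, max (|z l| - |z k|) 0) = 0 := by
    apply Finset.sum_eq_zero
    intro l _
    rcases eq_or_ne l k with rfl | h
    · simp
    · have := (huniq l h).le
      rw [← hk] at this
      simp [max_eq_right, sub_nonpos.mpr this]
  rw [hsum, sub_zero, max_eq_left hw]
  have hwk : w < |z k| := hk ▸ hwz
  rw [← hk, min_eq_right (by linarith)]
  ring
end
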